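/- Assume hypotheses (D), (M), (I). For every ε>0 and every r>0 there exists L>0 such that ‖f_ε(t,u¹) − f_ε(t,u²)‖ ≤ L‖u¹−u²‖_γ for all t∈ℝ and all u¹,u²∈C_γ with ‖u¹‖_γ ≤ r and ‖u²‖_γ ≤ r; that is, f_ε is Lipschitz continuous in its C_γ-variable, uniformly in t, on every closed ball of C_γ. -/

import Mathlib

open MeasureTheory Set Filter Topology Pointwise

noncomputable section

/-- Index set for the synaptic variables `z i j`, `i ≠ j`. -/
abbrev IdxZ (n : ℕ) := {p : Fin n × Fin n // p.1 ≠ p.2}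

/-- The state space `ℝ^{n²} = ℝ^n × ℝ^{n(n-1)}`, with the norm
`‖(x,z)‖ = max (‖x‖_∞) (‖z‖_∞)` (product of supremum norms). -/
abbrev NState (n : ℕ) := (Fin n → ℝ) × (IdxZ n → ℝ)

/-- The `C_γ` norm: `‖u‖_γ = sup_{t ≤ 0} e^{γ t} ‖u t‖`. -/
def gNorm (γ : ℝ) {E : Type*} [NormedAddCommGroup E] (u : ℝ → E) : ℝ :=
  ⨆ t : Iic (0 : ℝ), Real.exp (γ * t.1) * ‖u t.1‖

/-- Membership in `C_γ`: continuity on `(-∞,0]`, existence of a finite limit of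
`e^{γ t} u t` as `t → -∞`, and boundedness of `e^{γ t} ‖u t‖` on `(-∞,0]`. -/
def InC (γ : ℝ) {E : Type*} [NormedAddCommGroup E] [NormedSpace ℝ E] (u : ℝ → E) : Prop :=
  ContinuousOn u (Iic 0) ∧
    (∃ L : E, Tendsto (fun t => Real.exp (γ * t) • u t) atBot (𝓝 L)) ∧
    BddAbove (range fun t : Iic (0 : ℝ) => Real.exp (γ * t.1) * ‖u t.1‖)

/-- The history `u_t(s) = u (t+s)`. -/
def hist {E : Type*} (u : ℝ → E) (t : ℝ) : ℝ → E := fun s => u (t + s)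

/-- The sigmoidal function `σ_ε (s) = 1/(1+e^{-s/ε})`. -/
def sigm (ε s : ℝ) : ℝ := 1 / (1 + Real.exp (-s / ε))

/-- Hypothesis (D): `A i`, `B p` locally Lipschitz and bounded below by `α > 0`. -/
def HypD {n : ℕ} (α : ℝ) (A : Fin n → ℝ → ℝ) (B : IdxZ n → ℝ → ℝ) : Prop :=
  0 < α ∧ (∀ i, LocallyLipschitz (A i) ∧ ∀ s, α ≤ A i s) ∧
    ∀ p, LocallyLipschitz (B p) ∧ ∀ s, α ≤ B p s

/-- Hypothesis (M): `∫_{-∞}^0 e^{-γ t} dμ_p (t) < ∞`. -/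
def HypM {n : ℕ} (γ : ℝ) (μ : IdxZ n → Measure ℝ) : Prop :=
  ∀ p, ∫⁻ t in Iic (0 : ℝ), ENNReal.ofReal (Real.exp (-γ * t)) ∂(μ p) < ⊤

/-- Hypothesis (I): continuity of the external stimuli. -/
def HypI {n : ℕ} (Istim : Fin n → ℝ → ℝ) : Prop := ∀ i, Continuous (Istim i)

/-- Decay term `D`. -/
def decayT {n : ℕ} (A : Fin n → ℝ → ℝ) (B : IdxZ n → ℝ → ℝ) (u : ℝ → NState n) : NState n :=
  (fun i => -(A i ((u 0).1 i)) * (u 0).1 i, fun p => -(B p ((u 0).2 p)) * (u 0).2 p)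

/-- Sigmoidal excitation and inhibition term `Σ^ε`. -/
def sigTerm {n : ℕ} (ε : ℝ) (μ : IdxZ n → Measure ℝ) (c d : IdxZ n → ℝ)
    (Γ : Fin n → ℝ) (u : ℝ → NState n) : NState n :=
  (fun i => ∑ k : Fin n,
      if h : k ≠ i then
        ((u 0).2 ⟨(k, i), h⟩ - c ⟨(k, i), h⟩) *
          ∫ τ in Iic (0 : ℝ), sigm ε ((u τ).1 k - Γ k) ∂(μ ⟨(k, i), h⟩)
      else 0,
    fun p =>
      d p * (∫ τ in Iic (0 : ℝ), sigm ε ((u τ).1 p.1.1 - Γ p.1.1) ∂(μ p)) *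
        max ((u 0).1 p.1.2) 0)

/-- Stimulus term `I(t) = ((I_i(t))_i, 0)`. -/
def stimT {n : ℕ} (Istim : Fin n → ℝ → ℝ) (t : ℝ) : NState n :=
  (fun i => Istim i t, 0)

/-- Right-hand side `f_ε(t,u) = D(u) + Σ^ε(u) + I(t)` of the sigmoidal system. -/
def fEps {n : ℕ} (ε : ℝ) (A : Fin n → ℝ → ℝ) (B : IdxZ n → ℝ → ℝ)
    (μ : IdxZ n → Measure ℝ) (c d : IdxZ n → ℝ) (Γ : Fin n → ℝ)
    (Istim : Fin n → ℝ → ℝ) (t : ℝ) (u : ℝ → NState n) : NState n :=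
  decayT A B u + sigTerm ε μ c d Γ u + stimT Istim t

/-- Solution of the sigmoidal system on `[t₀, t₁)` with initial datum `u₀` at `t₀`. -/
def IsSigSolOn {n : ℕ} (ε : ℝ) (A : Fin n → ℝ → ℝ) (B : IdxZ n → ℝ → ℝ)
    (μ : IdxZ n → Measure ℝ) (c d : IdxZ n → ℝ) (Γ : Fin n → ℝ)
    (Istim : Fin n → ℝ → ℝ) (t₀ t₁ : ℝ) (u₀ u : ℝ → NState n) : Prop :=
  (∀ s ≤ (0 : ℝ), u (t₀ + s) = u₀ s) ∧ ContinuousOn u (Iio t₁) ∧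
    ∀ t ∈ Ico t₀ t₁, HasDerivAt u (fEps ε A B μ c d Γ Istim t (hist u t)) t

/-- Solution of the sigmoidal system on the closed interval `[t₀, t₁]`. -/
def IsSigSolOnC {n : ℕ} (ε : ℝ) (A : Fin n → ℝ → ℝ) (B : IdxZ n → ℝ → ℝ)
    (μ : IdxZ n → Measure ℝ) (c d : IdxZ n → ℝ) (Γ : Fin n → ℝ)
    (Istim : Fin n → ℝ → ℝ) (t₀ t₁ : ℝ) (u₀ u : ℝ → NState n) : Prop :=
  (∀ s ≤ (0 : ℝ), u (t₀ + s) = u₀ s) ∧ ContinuousOn u (Iic t₁) ∧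
    ∀ t ∈ Ico t₀ t₁, HasDerivAt u (fEps ε A B μ c d Γ Istim t (hist u t)) t

/-- `b(ε) = ε log((1-ε)/ε)` for `ε ≠ 0`, `b(0) = 0`. -/
def bfun (ε : ℝ) : ℝ := if ε = 0 then 0 else ε * Real.log ((1 - ε) / ε)

/-- The set-valued function `χ_ε`. -/
def chiSet (ε s : ℝ) : Set ℝ :=
  if s < -bfun ε then Icc 0 ε else if s ≤ bfun ε then Icc 0 1 else Icc (1 - ε) 1

/-- Aumann integral over `(-∞,0]` of a set-valued map `F` with respect to `μ`:
the set of integrals of integrable measurable selectors of `F`. -/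
def aumann (F : ℝ → Set ℝ) (μ : Measure ℝ) : Set ℝ :=
  {y | ∃ s : ℝ → ℝ, Measurable s ∧ IntegrableOn s (Iic 0) μ ∧
      (∀ t ≤ (0 : ℝ), s t ∈ F t) ∧ y = ∫ t in Iic (0 : ℝ), s t ∂μ}

/-- Directed Hausdorff pseudometric `haus(A,B) = sup_{a∈A} inf_{b∈B} |a-b|`. -/
def hausd (S T : Set ℝ) : ℝ :=
  sSup ((fun a => sInf ((fun b => |a - b|) '' T)) '' S)

/-- The `i`-th factor of `X^ε(u)`: the Minkowski sum over `k ≠ i` of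
`(z_{ki}(0) - c_{ki}) • ∫ χ_ε(x_k(τ)-Γ_k) dμ_{ki}(τ)`. -/
def XsetX {n : ℕ} (ε : ℝ) (μ : IdxZ n → Measure ℝ) (c : IdxZ n → ℝ)
    (Γ : Fin n → ℝ) (u : ℝ → NState n) (i : Fin n) : Set ℝ :=
  {y | ∃ g : Fin n → ℝ, g i = 0 ∧
      (∀ k, ∀ h : k ≠ i,
        g k ∈ ((u 0).2 ⟨(k, i), h⟩ - c ⟨(k, i), h⟩) •
          aumann (fun τ => chiSet ε ((u τ).1 k - Γ k)) (μ ⟨(k, i), h⟩)) ∧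
      y = ∑ k, g k}

/-- The set-valued map `X^ε : C_γ → 𝒫(ℝ^{n²})`. -/
def Xset {n : ℕ} (ε : ℝ) (μ : IdxZ n → Measure ℝ) (c d : IdxZ n → ℝ)
    (Γ : Fin n → ℝ) (u : ℝ → NState n) : Set (NState n) :=
  {v | (∀ i, v.1 i ∈ XsetX ε μ c Γ u i) ∧
      ∀ p : IdxZ n, v.2 p ∈ (d p * max ((u 0).1 p.1.2) 0) •
        aumann (fun τ => chiSet ε ((u τ).1 p.1.1 - Γ p.1.1)) (μ p)}

/-- Solution of the `ε`-inflated differential inclusion on `[t₀,t₁]` with initial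
datum `u₀` at `t₀`: absolutely continuous on `[t₀,t₁]` (expressed in integral form)
with `u'(t) = D(u_t) + Σ(t) + I(t)` a.e. for some integrable selector `Σ(t) ∈ X^ε(u_t)`. -/
def IsIncSolOn {n : ℕ} (ε : ℝ) (A : Fin n → ℝ → ℝ) (B : IdxZ n → ℝ → ℝ)
    (μ : IdxZ n → Measure ℝ) (c d : IdxZ n → ℝ) (Γ : Fin n → ℝ)
    (Istim : Fin n → ℝ → ℝ) (t₀ t₁ : ℝ) (u₀ u : ℝ → NState n) : Prop :=
  (∀ s ≤ (0 : ℝ), u (t₀ + s) = u₀ s) ∧ ContinuousOn u (Icc t₀ t₁) ∧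
    ∃ S : ℝ → NState n,
      (∀ t ∈ Icc t₀ t₁, S t ∈ Xset ε μ c d Γ (hist u t)) ∧
      IntegrableOn (fun s => decayT A B (hist u s) + S s + stimT Istim s) (Icc t₀ t₁) ∧
      ∀ t ∈ Icc t₀ t₁,
        u t = u₀ 0 + ∫ s in t₀..t, (decayT A B (hist u s) + S s + stimT Istim s)

/-- Clamped history: the canonical representative in `C_γ` of the history `u_t`. -/
def clampHist {n : ℕ} (u : ℝ → NState n) (t : ℝ) : ℝ → NState n :=
  fun s => u (t + min s 0)

/-- Attainability set `Φ^ε(t, t₀, u₀)` of the `ε`-inflated inclusion. -/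
def attain {n : ℕ} (ε : ℝ) (A : Fin n → ℝ → ℝ) (B : IdxZ n → ℝ → ℝ)
    (μ : IdxZ n → Measure ℝ) (c d : IdxZ n → ℝ) (Γ : Fin n → ℝ)
    (Istim : Fin n → ℝ → ℝ) (t t₀ : ℝ) (u₀ : ℝ → NState n) : Set (ℝ → NState n) :=
  {v | ∃ u, IsIncSolOn ε A B μ c d Γ Istim t₀ t u₀ u ∧ v = clampHist u t}

/-- Total mass `|μ_p|` of the measure `μ_p` on `(-∞,0]`. -/
def mTot {n : ℕ} (μ : IdxZ n → Measure ℝ) (p : IdxZ n) : ℝ := (μ p (Iic 0)).toReal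

/-- Hypothesis (A). -/
def HypA {n : ℕ} (α : ℝ) (μ : IdxZ n → Measure ℝ) (d : IdxZ n → ℝ) : Prop :=
  ∃ lx lz nx nz eta eps : IdxZ n → ℝ,
    (∀ p, lx p ∈ ({1, mTot μ p ^ 2, d p ^ 2, mTot μ p ^ 2 * d p ^ 2} : Set ℝ) ∧
        lz p ∈ ({1, mTot μ p ^ 2, d p ^ 2, mTot μ p ^ 2 * d p ^ 2} : Set ℝ) ∧
        lx p * lz p = mTot μ p ^ 2 * d p ^ 2 ∧
        nx p ∈ ({1, mTot μ p ^ 2} : Set ℝ) ∧ nz p ∈ ({1, mTot μ p ^ 2} : Set ℝ) ∧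
        nx p * nz p = mTot μ p ^ 2 ∧ 0 < eta p ∧ 0 < eps p ∧
        nz p / eta p + lz p / eps p < 2 * α) ∧
    ∀ i : Fin n,
      (∑ k : Fin n, if h : k ≠ i then
          nx ⟨(k, i), h⟩ * eta ⟨(k, i), h⟩ + lx ⟨(k, i), h⟩ * eps ⟨(k, i), h⟩
        else 0) < 2 * α

/-- Directed Hausdorff "distance" between subsets of `C_γ`, w.r.t. `‖·‖_γ`. -/
def setDistG (γ : ℝ) {n : ℕ} (S T : Set (ℝ → NState n)) : ℝ :=
  sSup ((fun a => sInf ((fun b => gNorm γ (fun s => a s - b s)) '' T)) '' S)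



/-! ### Auxiliary lemmas -/

lemma lipOn_of_locallyLipschitz {f : ℝ → ℝ} (hf : LocallyLipschitz f) {s : Set ℝ}
    (hs : IsCompact s) : ∃ C : ℝ, 0 ≤ C ∧ ∀ a ∈ s, ∀ b ∈ s, |f a - f b| ≤ C * |a - b| := by
  choose K t ht hK using hf
  choose δ hδ hball using fun x => Metric.mem_nhds_iff.1 (ht x)
  obtain ⟨F, hF⟩ := hs.elim_finite_subcover (fun x : ℝ => Metric.ball x (δ x))
    (fun x => Metric.isOpen_ball) (fun x hx => mem_iUnion.2 ⟨x, Metric.mem_ball_self (hδ x)⟩)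
  obtain ⟨η, hη, hleb⟩ := lebesgue_number_lemma_of_metric hs
    (c := fun i : F => Metric.ball (i : ℝ) (δ i)) (fun i => Metric.isOpen_ball)
    (by intro x hx; obtain ⟨i, hi, hxi⟩ := mem_iUnion₂.1 (hF hx); exact mem_iUnion.2 ⟨⟨i, hi⟩, hxi⟩)
  obtain ⟨M, hM⟩ := hs.exists_bound_of_continuousOn (LocallyLipschitz.continuous (by
    intro x; exact ⟨K x, t x, ht x, hK x⟩)).continuousOn
  set K' : NNReal := F.sup K with hK'
  refine ⟨max (K' : ℝ) (2 * max M 0 / η), le_trans (by positivity) (le_max_left _ _), ?_⟩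
  intro a ha b hb
  rcases lt_or_ge (dist a b) η with hd | hd
  · obtain ⟨i, hi⟩ := hleb a ha
    have hai : a ∈ t i := hball i (hi (Metric.mem_ball_self hη))
    have hbi : b ∈ t i := hball i (hi (by simpa [Metric.mem_ball, dist_comm] using hd))
    have hli := (hK i).dist_le_mul a hai b hbi
    rw [Real.dist_eq, Real.dist_eq] at hli
    have hKle : (K i : ℝ) ≤ (K' : ℝ) := by
      exact_mod_cast Finset.le_sup (f := K) i.2
    calc |f a - f b| ≤ (K i : ℝ) * |a - b| := hli
      _ ≤ (K' : ℝ) * |a - b| := mul_le_mul_of_nonneg_right hKle (abs_nonneg _)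
      _ ≤ max (K' : ℝ) (2 * max M 0 / η) * |a - b| :=
          mul_le_mul_of_nonneg_right (le_max_left _ _) (abs_nonneg _)
  · have h1 : |f a - f b| ≤ 2 * max M 0 := by
      have := hM a ha; have := hM b hb
      rw [Real.norm_eq_abs] at *
      have := abs_sub_abs_le_abs_sub (f a) (f b)
      have := abs_sub (f a) (f b)
      cases abs_cases (f a - f b) <;> nlinarith [le_max_left M 0, le_max_right M (0:ℝ)]
    have h2 : η ≤ |a - b| := by rwa [Real.dist_eq] at hd
    calc |f a - f b| ≤ 2 * max M 0 := h1
      _ ≤ 2 * max M 0 / η * |a - b| := by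
          rw [div_mul_eq_mul_div, le_div_iff₀ hη]; nlinarith [le_max_right M (0:ℝ)]
      _ ≤ max (K' : ℝ) (2 * max M 0 / η) * |a - b| :=
          mul_le_mul_of_nonneg_right (le_max_right _ _) (abs_nonneg _)

lemma sigm_nonneg (ε s : ℝ) : 0 ≤ sigm ε s := by
  unfold sigm; positivity

lemma sigm_le_one (ε s : ℝ) : sigm ε s ≤ 1 := by
  unfold sigm
  rw [div_le_one (by positivity)]
  nlinarith [Real.exp_pos (-s/ε)]

lemma sigm_continuous (ε : ℝ) : Continuous (sigm ε) := by
  unfold sigm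
  exact continuous_const.div
    (continuous_const.add (Real.continuous_exp.comp (continuous_id.neg.div_const ε)))
    (fun x => by positivity)

lemma sigm_hasDerivAt (ε : ℝ) (s : ℝ) :
    HasDerivAt (sigm ε) (-(Real.exp (-s / ε) * (-1 / ε)) / (1 + Real.exp (-s / ε)) ^ 2) s := by
  have h1 : HasDerivAt (fun x : ℝ => -x / ε) (-1 / ε) s := by
    simpa using ((hasDerivAt_id s).neg.div_const ε)
  have h2 : HasDerivAt (fun x : ℝ => Real.exp (-x / ε)) (Real.exp (-s / ε) * (-1 / ε)) s :=
    h1.exp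
  have h3 : HasDerivAt (fun x : ℝ => 1 + Real.exp (-x / ε)) (Real.exp (-s / ε) * (-1 / ε)) s :=
    h2.const_add 1
  have h4 := h3.inv (by positivity)
  have : sigm ε = fun x : ℝ => (1 + Real.exp (-x / ε))⁻¹ := by
    funext x; simp [sigm, one_div]
  rw [this]
  exact h4

lemma sigm_lip (ε : ℝ) (hε : 0 < ε) (a b : ℝ) :
    |sigm ε a - sigm ε b| ≤ 1 / (4 * ε) * |a - b| := by
  have key : ∀ x : ℝ, ‖-(Real.exp (-x / ε) * (-1 / ε)) / (1 + Real.exp (-x / ε)) ^ 2‖ ≤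
      1 / (4 * ε) := by
    intro x
    set E := Real.exp (-x / ε) with hE
    have hEpos : 0 < E := Real.exp_pos _
    have hrw : -(E * (-1 / ε)) / (1 + E) ^ 2 = E / (ε * (1 + E) ^ 2) := by
      field_simp
    rw [Real.norm_eq_abs, hrw, abs_of_nonneg (by positivity)]
    rw [div_le_div_iff₀ (by positivity) (by positivity)]
    nlinarith [mul_nonneg hε.le (sq_nonneg (1 - E))]
  have := Convex.norm_image_sub_le_of_norm_hasDerivWithin_le
    (f := sigm ε) (f' := fun x => -(Real.exp (-x / ε) * (-1 / ε)) / (1 + Real.exp (-x / ε)) ^ 2)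
    (C := 1 / (4 * ε)) (s := univ)
    (fun x _ => (sigm_hasDerivAt ε x).hasDerivWithinAt) (fun x _ => key x)
    convex_univ (mem_univ b) (mem_univ a)
  simpa [Real.norm_eq_abs] using this

set_option maxHeartbeats 2000000

/-- `f_ε` is Lipschitz in its `C_γ` variable, uniformly in `t`, on
every closed ball of `C_γ`. -/
theorem stmt4 {n : ℕ} (hn : 2 ≤ n) (γ α : ℝ) (hγ : 0 < γ)
    (A : Fin n → ℝ → ℝ) (B : IdxZ n → ℝ → ℝ) (μ : IdxZ n → Measure ℝ)
    (c d : IdxZ n → ℝ) (Γ : Fin n → ℝ) (Istim : Fin n → ℝ → ℝ)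
    (hD : HypD α A B) (hM : HypM γ μ) (hI : HypI Istim)
    (hc : ∀ p, 0 ≤ c p) (hd : ∀ p, 0 ≤ d p)
    (ε : ℝ) (hε : 0 < ε) (r : ℝ) (hr : 0 < r) :
    ∃ L > 0, ∀ t : ℝ, ∀ u v : ℝ → NState n, InC γ u → InC γ v →
      gNorm γ u ≤ r → gNorm γ v ≤ r →
      ‖fEps ε A B μ c d Γ Istim t u - fEps ε A B μ c d Γ Istim t v‖ ≤
        L * gNorm γ (fun s => u s - v s) := by
  obtain ⟨hα, hA, hB⟩ := hD
  have hIcc : IsCompact (Icc (-r) r) := isCompact_Icc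
  -- Lipschitz constants for the decay terms
  have hCA : ∀ i : Fin n, ∃ C : ℝ, 0 ≤ C ∧ ∀ a ∈ Icc (-r) r, ∀ b ∈ Icc (-r) r,
      |A i a * a - A i b * b| ≤ C * |a - b| := by
    intro i
    obtain ⟨C, hC0, hC⟩ := lipOn_of_locallyLipschitz (hA i).1 hIcc
    obtain ⟨M, hM⟩ := hIcc.exists_bound_of_continuousOn ((hA i).1.continuous).continuousOn
    refine ⟨max M 0 + C * r, by positivity, ?_⟩
    intro a ha b hb
    have h1 : A i a * a - A i b * b = A i a * (a - b) + (A i a - A i b) * b := by ring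
    have h2 : |A i a| ≤ max M 0 :=
      le_trans (by simpa [Real.norm_eq_abs] using hM a ha) (le_max_left _ _)
    have h3 : |b| ≤ r := abs_le.2 ⟨hb.1, hb.2⟩
    calc |A i a * a - A i b * b| ≤ |A i a * (a - b)| + |(A i a - A i b) * b| := by
          rw [h1]; exact abs_add_le _ _
      _ = |A i a| * |a - b| + |A i a - A i b| * |b| := by rw [abs_mul, abs_mul]
      _ ≤ max M 0 * |a - b| + (C * |a - b|) * r := by
          have p1 : |A i a| * |a - b| ≤ max M 0 * |a - b| :=
            mul_le_mul_of_nonneg_right h2 (abs_nonneg _)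
          have p2 : |A i a - A i b| * |b| ≤ (C * |a - b|) * r :=
            mul_le_mul (hC a ha b hb) h3 (abs_nonneg _) (by positivity)
          linarith
      _ = (max M 0 + C * r) * |a - b| := by ring
  have hCB : ∀ p : IdxZ n, ∃ C : ℝ, 0 ≤ C ∧ ∀ a ∈ Icc (-r) r, ∀ b ∈ Icc (-r) r,
      |B p a * a - B p b * b| ≤ C * |a - b| := by
    intro p
    obtain ⟨C, hC0, hC⟩ := lipOn_of_locallyLipschitz (hB p).1 hIcc
    obtain ⟨M, hM⟩ := hIcc.exists_bound_of_continuousOn ((hB p).1.continuous).continuousOn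
    refine ⟨max M 0 + C * r, by positivity, ?_⟩
    intro a ha b hb
    have h1 : B p a * a - B p b * b = B p a * (a - b) + (B p a - B p b) * b := by ring
    have h2 : |B p a| ≤ max M 0 :=
      le_trans (by simpa [Real.norm_eq_abs] using hM a ha) (le_max_left _ _)
    have h3 : |b| ≤ r := abs_le.2 ⟨hb.1, hb.2⟩
    calc |B p a * a - B p b * b| ≤ |B p a * (a - b)| + |(B p a - B p b) * b| := by
          rw [h1]; exact abs_add_le _ _
      _ = |B p a| * |a - b| + |B p a - B p b| * |b| := by rw [abs_mul, abs_mul]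
      _ ≤ max M 0 * |a - b| + (C * |a - b|) * r := by
          have p1 : |B p a| * |a - b| ≤ max M 0 * |a - b| :=
            mul_le_mul_of_nonneg_right h2 (abs_nonneg _)
          have p2 : |B p a - B p b| * |b| ≤ (C * |a - b|) * r :=
            mul_le_mul (hC a ha b hb) h3 (abs_nonneg _) (by positivity)
          linarith
      _ = (max M 0 + C * r) * |a - b| := by ring
  choose CA hCA0 hCAlip using hCA
  choose CB hCB0 hCBlip using hCB
  -- measure facts
  have hfin : ∀ p, μ p (Iic 0) < ⊤ := by
    intro p
    have h1 : μ p (Iic 0) = ∫⁻ τ in Iic (0 : ℝ), 1 ∂μ p := by rw [setLIntegral_one]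
    rw [h1]
    have hmeas : Measurable fun τ : ℝ => ENNReal.ofReal (Real.exp (-γ * τ)) :=
      ((measurable_id.const_mul (-γ)).exp).ennreal_ofReal
    refine lt_of_le_of_lt (setLIntegral_mono hmeas ?_) (hM p)
    intro τ hτ
    rw [show (1 : ENNReal) = ENNReal.ofReal 1 by simp]
    refine ENNReal.ofReal_le_ofReal (Real.one_le_exp ?_)
    simp only [mem_Iic] at hτ
    nlinarith
  have hKint : ∀ p, IntegrableOn (fun τ => Real.exp (-γ * τ)) (Iic 0) (μ p) := by
    intro p
    constructor
    · exact (Real.continuous_exp.comp (continuous_const.mul continuous_id)).aestronglyMeasurable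
    · rw [HasFiniteIntegral]
      have : ∀ τ : ℝ, ‖Real.exp (-γ * τ)‖ₑ = ENNReal.ofReal (Real.exp (-γ * τ)) := by
        intro τ
        rw [← ofReal_norm, Real.norm_eq_abs, abs_of_nonneg (Real.exp_nonneg _)]
      simp only [this]
      exact hM p
  obtain ⟨Mm, hMm⟩ : ∃ x : IdxZ n → ℝ, x = fun p => (μ p (Iic 0)).toReal := ⟨_, rfl⟩
  obtain ⟨Kk, hKk⟩ : ∃ x : IdxZ n → ℝ,
      x = fun p => ∫ τ in Iic (0 : ℝ), Real.exp (-γ * τ) ∂μ p := ⟨_, rfl⟩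
  have hM0 : ∀ p, 0 ≤ Mm p := by
    intro p; simp only [hMm]; exact ENNReal.toReal_nonneg
  have hK0 : ∀ p, 0 ≤ Kk p := by
    intro p; simp only [hKk]
    exact setIntegral_nonneg measurableSet_Iic (fun τ _ => Real.exp_nonneg _)
  have hMK : ∀ p, Mm p ≤ Kk p := by
    intro p
    simp only [hMm, hKk]
    have h1 : (μ p (Iic 0)).toReal = ∫ _ in Iic (0 : ℝ), (1 : ℝ) ∂μ p := by
      rw [setIntegral_const, smul_eq_mul, mul_one]; rfl
    rw [h1]
    haveI : IsFiniteMeasure ((μ p).restrict (Iic 0)) :=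
      ⟨by rw [Measure.restrict_apply_univ]; exact hfin p⟩
    refine setIntegral_mono_on (integrable_const 1) (hKint p) measurableSet_Iic ?_
    intro τ hτ
    refine Real.one_le_exp ?_
    simp only [mem_Iic] at hτ
    nlinarith
  -- the constants
  obtain ⟨S, hS⟩ : ∃ x : IdxZ n → ℝ,
      x = fun p => Mm p + (r + c p) * (Kk p / (4 * ε)) := ⟨_, rfl⟩
  have hS0 : ∀ p, 0 ≤ S p := by
    intro p
    simp only [hS]
    have h1 := hM0 p; have h2 := hK0 p; have h3 := hc p
    have h4 : 0 ≤ (r + c p) * (Kk p / (4 * ε)) :=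
      mul_nonneg (by linarith) (div_nonneg h2 (by positivity))
    linarith
  obtain ⟨T, hT⟩ : ∃ x : ℝ, x = ∑ p : IdxZ n, S p := ⟨_, rfl⟩
  have hT0 : 0 ≤ T := hT ▸ Finset.sum_nonneg fun p _ => hS0 p
  have hST : ∀ p, S p ≤ T := fun p =>
    hT ▸ Finset.single_le_sum (f := S) (fun q _ => hS0 q) (Finset.mem_univ p)
  have hLzterm : ∀ p, 0 ≤ d p * (r * (Kk p / (4 * ε)) + Mm p) := by
    intro p
    exact mul_nonneg (hd p)
      (add_nonneg (mul_nonneg hr.le (div_nonneg (hK0 p) (by positivity))) (hM0 p))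
  obtain ⟨Lz, hLz⟩ : ∃ x : ℝ,
      x = ∑ p : IdxZ n, d p * (r * (Kk p / (4 * ε)) + Mm p) := ⟨_, rfl⟩
  have hLz0 : 0 ≤ Lz := hLz ▸ Finset.sum_nonneg fun p _ => hLzterm p
  obtain ⟨L, hL⟩ : ∃ x : ℝ,
      x = 1 + (∑ i, CA i) + (∑ p, CB p) + n * T + Lz := ⟨_, rfl⟩
  have hCAs : 0 ≤ ∑ i, CA i := Finset.sum_nonneg fun i _ => hCA0 i
  have hCBs : 0 ≤ ∑ p, CB p := Finset.sum_nonneg fun p _ => hCB0 p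
  have hnT : 0 ≤ (n : ℝ) * T := mul_nonneg (Nat.cast_nonneg n) hT0
  have hLpos : 0 < L := by rw [hL]; linarith
  refine ⟨L, hLpos, ?_⟩
  intro t u v hu hv hur hvr
  obtain ⟨g, hg⟩ : ∃ x : ℝ, x = gNorm γ (fun s => u s - v s) := ⟨_, rfl⟩
  rw [show gNorm γ (fun s => u s - v s) = g from hg.symm]
  -- pointwise bounds from the gNorm
  obtain ⟨M1, hM1⟩ := id hu.2.2
  obtain ⟨M2, hM2⟩ := id hv.2.2
  have hbdd : BddAbove (range fun τ : Iic (0 : ℝ) =>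
      Real.exp (γ * τ.1) * ‖(fun s => u s - v s) τ.1‖) := by
    refine ⟨M1 + M2, ?_⟩
    rintro y ⟨τ, rfl⟩
    have h1 : Real.exp (γ * τ.1) * ‖u τ.1‖ ≤ M1 := hM1 ⟨τ, rfl⟩
    have h2 : Real.exp (γ * τ.1) * ‖v τ.1‖ ≤ M2 := hM2 ⟨τ, rfl⟩
    have h3 : ‖u τ.1 - v τ.1‖ ≤ ‖u τ.1‖ + ‖v τ.1‖ := norm_sub_le _ _
    have h4 := Real.exp_pos (γ * τ.1)
    simp only
    nlinarith
  have hle : ∀ τ : Iic (0 : ℝ), Real.exp (γ * τ.1) * ‖u τ.1 - v τ.1‖ ≤ g := by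
    intro τ
    rw [hg]
    exact le_ciSup hbdd τ
  have hg0 : 0 ≤ g := le_trans (by positivity) (hle ⟨0, mem_Iic.2 (le_refl 0)⟩)
  have hptw : ∀ τ ≤ (0 : ℝ), ‖u τ - v τ‖ ≤ Real.exp (-γ * τ) * g := by
    intro τ hτ
    have h1 := hle ⟨τ, mem_Iic.2 hτ⟩
    have h2 : Real.exp (-γ * τ) * (Real.exp (γ * τ) * ‖u τ - v τ‖) ≤ Real.exp (-γ * τ) * g :=
      mul_le_mul_of_nonneg_left h1 (Real.exp_nonneg _)
    have h0 : -γ * τ + γ * τ = 0 := by ring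
    calc ‖u τ - v τ‖ = Real.exp (-γ * τ) * (Real.exp (γ * τ) * ‖u τ - v τ‖) := by
          rw [← mul_assoc, ← Real.exp_add, h0, Real.exp_zero, one_mul]
      _ ≤ Real.exp (-γ * τ) * g := h2
  have hx : ∀ τ ≤ (0 : ℝ), ∀ k : Fin n, |(u τ).1 k - (v τ).1 k| ≤ Real.exp (-γ * τ) * g := by
    intro τ hτ k
    have h1 : |(u τ).1 k - (v τ).1 k| = ‖((u τ - v τ).1) k‖ := by
      simp [Prod.fst_sub, Real.norm_eq_abs]
    rw [h1]
    exact le_trans (le_trans (norm_le_pi_norm _ k) (norm_fst_le _)) (hptw τ hτ)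
  have hx0 : ∀ k : Fin n, |(u 0).1 k - (v 0).1 k| ≤ g := by
    intro k
    have := hx 0 (le_refl 0) k
    simpa using this
  have hz0 : ∀ p : IdxZ n, |(u 0).2 p - (v 0).2 p| ≤ g := by
    intro p
    have h1 : |(u 0).2 p - (v 0).2 p| = ‖((u 0 - v 0).2) p‖ := by
      simp [Prod.snd_sub, Real.norm_eq_abs]
    have h2 := hptw 0 (le_refl 0)
    simp only [mul_zero, Real.exp_zero, one_mul] at h2
    rw [h1]
    exact le_trans (le_trans (norm_le_pi_norm _ p) (norm_snd_le _)) h2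
  -- bounds ‖u 0‖ ≤ r componentwise
  have hu0 : ‖u 0‖ ≤ r := by
    have h1 : Real.exp (γ * (0 : ℝ)) * ‖u 0‖ ≤ gNorm γ u := le_ciSup hu.2.2 ⟨0, mem_Iic.2 (le_refl 0)⟩
    simpa using h1.trans hur
  have hv0 : ‖v 0‖ ≤ r := by
    have h1 : Real.exp (γ * (0 : ℝ)) * ‖v 0‖ ≤ gNorm γ v := le_ciSup hv.2.2 ⟨0, mem_Iic.2 (le_refl 0)⟩
    simpa using h1.trans hvr
  have hu0x : ∀ k, |(u 0).1 k| ≤ r := fun k => by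
    calc |(u 0).1 k| = ‖(u 0).1 k‖ := rfl
      _ ≤ ‖(u 0).1‖ := norm_le_pi_norm _ k
      _ ≤ ‖u 0‖ := norm_fst_le _
      _ ≤ r := hu0
  have hv0x : ∀ k, |(v 0).1 k| ≤ r := fun k => by
    calc |(v 0).1 k| = ‖(v 0).1 k‖ := rfl
      _ ≤ ‖(v 0).1‖ := norm_le_pi_norm _ k
      _ ≤ ‖v 0‖ := norm_fst_le _
      _ ≤ r := hv0
  have hu0z : ∀ p, |(u 0).2 p| ≤ r := fun p => by
    calc |(u 0).2 p| = ‖(u 0).2 p‖ := rfl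
      _ ≤ ‖(u 0).2‖ := norm_le_pi_norm _ p
      _ ≤ ‖u 0‖ := norm_snd_le _
      _ ≤ r := hu0
  have hv0z : ∀ p, |(v 0).2 p| ≤ r := fun p => by
    calc |(v 0).2 p| = ‖(v 0).2 p‖ := rfl
      _ ≤ ‖(v 0).2‖ := norm_le_pi_norm _ p
      _ ≤ ‖v 0‖ := norm_snd_le _
      _ ≤ r := hv0
  -- integrability of the sigmoid integrands
  haveI hfm : ∀ p : IdxZ n, IsFiniteMeasure ((μ p).restrict (Iic 0)) := fun p =>
    ⟨by rw [Measure.restrict_apply_univ]; exact hfin p⟩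
  have hsig : ∀ (w : ℝ → NState n), ContinuousOn w (Iic 0) → ∀ (k : Fin n) (p : IdxZ n),
      IntegrableOn (fun τ => sigm ε ((w τ).1 k - Γ k)) (Iic 0) (μ p) := by
    intro w hw k p
    have hc1 : ContinuousOn (fun τ => sigm ε ((w τ).1 k - Γ k)) (Iic 0) := by
      have h1 : ContinuousOn (fun τ => (w τ).1 k - Γ k) (Iic 0) :=
        (((continuous_apply k).comp continuous_fst).comp_continuousOn hw).sub continuousOn_const
      exact (sigm_continuous ε).comp_continuousOn h1
    haveI := hfm p
    refine Integrable.mono' (integrable_const 1) (hc1.aestronglyMeasurable measurableSet_Iic) ?_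
    refine (ae_restrict_iff' measurableSet_Iic).2 (ae_of_all _ fun τ _ => ?_)
    rw [Real.norm_eq_abs, abs_of_nonneg (sigm_nonneg _ _)]
    exact sigm_le_one _ _
  have hJub : ∀ (w : ℝ → NState n), ContinuousOn w (Iic 0) → ∀ (k : Fin n) (p : IdxZ n),
      (0 ≤ ∫ τ in Iic (0 : ℝ), sigm ε ((w τ).1 k - Γ k) ∂μ p) ∧
      (∫ τ in Iic (0 : ℝ), sigm ε ((w τ).1 k - Γ k) ∂μ p) ≤ Mm p := by
    intro w hw k p
    constructor
    · exact setIntegral_nonneg measurableSet_Iic fun τ _ => sigm_nonneg _ _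
    · haveI := hfm p
      calc (∫ τ in Iic (0 : ℝ), sigm ε ((w τ).1 k - Γ k) ∂μ p)
          ≤ ∫ _ in Iic (0 : ℝ), (1 : ℝ) ∂μ p :=
            setIntegral_mono_on (hsig w hw k p) (integrable_const 1) measurableSet_Iic
              (fun τ _ => sigm_le_one _ _)
        _ = Mm p := by simp only [hMm]; rw [setIntegral_const, smul_eq_mul, mul_one]; rfl
  -- difference of the sigmoid integrals
  have hJdiff : ∀ (k : Fin n) (p : IdxZ n),
      |(∫ τ in Iic (0 : ℝ), sigm ε ((u τ).1 k - Γ k) ∂μ p) -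
        ∫ τ in Iic (0 : ℝ), sigm ε ((v τ).1 k - Γ k) ∂μ p| ≤ Kk p / (4 * ε) * g := by
    intro k p
    have hiu := hsig u hu.1 k p
    have hiv := hsig v hv.1 k p
    rw [← integral_sub hiu hiv]
    calc |∫ τ in Iic (0 : ℝ), (sigm ε ((u τ).1 k - Γ k) - sigm ε ((v τ).1 k - Γ k)) ∂μ p|
        ≤ ∫ τ in Iic (0 : ℝ), |sigm ε ((u τ).1 k - Γ k) - sigm ε ((v τ).1 k - Γ k)| ∂μ p := by
          simpa [Real.norm_eq_abs] using
            norm_integral_le_integral_norm (μ := (μ p).restrict (Iic 0))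
              (f := fun τ => sigm ε ((u τ).1 k - Γ k) - sigm ε ((v τ).1 k - Γ k))
      _ ≤ ∫ τ in Iic (0 : ℝ), g / (4 * ε) * Real.exp (-γ * τ) ∂μ p := by
          refine setIntegral_mono_on ((hiu.sub hiv).abs) ((hKint p).const_mul _)
            measurableSet_Iic ?_
          intro τ hτ
          simp only [mem_Iic] at hτ
          calc |sigm ε ((u τ).1 k - Γ k) - sigm ε ((v τ).1 k - Γ k)|
              ≤ 1 / (4 * ε) * |((u τ).1 k - Γ k) - ((v τ).1 k - Γ k)| := sigm_lip ε hε _ _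
            _ = 1 / (4 * ε) * |(u τ).1 k - (v τ).1 k| := by ring_nf
            _ ≤ 1 / (4 * ε) * (Real.exp (-γ * τ) * g) := by
                refine mul_le_mul_of_nonneg_left (hx τ hτ k) (by positivity)
            _ = g / (4 * ε) * Real.exp (-γ * τ) := by ring
      _ = g / (4 * ε) * Kk p := by simp only [hKk]; rw [integral_const_mul]
      _ = Kk p / (4 * ε) * g := by ring
  -- reduce the norm estimate to components
  have hnormle : ∀ w : NState n, (∀ i, |w.1 i| ≤ L * g) → (∀ p, |w.2 p| ≤ L * g) →
      ‖w‖ ≤ L * g := by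
    intro w h1 h2
    rw [Prod.norm_def]
    refine max_le ?_ ?_
    · exact (pi_norm_le_iff_of_nonneg (mul_nonneg hLpos.le hg0)).2 h1
    · exact (pi_norm_le_iff_of_nonneg (mul_nonneg hLpos.le hg0)).2 h2
  refine hnormle _ ?_ ?_
  · -- x components
    intro i
    have hcomp : (fEps ε A B μ c d Γ Istim t u - fEps ε A B μ c d Γ Istim t v).1 i =
        (-(A i ((u 0).1 i)) * (u 0).1 i - -(A i ((v 0).1 i)) * (v 0).1 i) +
        ((sigTerm ε μ c d Γ u).1 i - (sigTerm ε μ c d Γ v).1 i) := by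
      simp only [fEps, decayT, stimT, Prod.fst_sub, Prod.fst_add, Pi.sub_apply, Pi.add_apply]
      ring
    rw [hcomp]
    have hdec : |(-(A i ((u 0).1 i)) * (u 0).1 i - -(A i ((v 0).1 i)) * (v 0).1 i)| ≤
        CA i * g := by
      have h1 := hCAlip i ((u 0).1 i) (abs_le.1 (hu0x i)) ((v 0).1 i) (abs_le.1 (hv0x i))
      have h2 : (-(A i ((u 0).1 i)) * (u 0).1 i - -(A i ((v 0).1 i)) * (v 0).1 i) =
          -(A i ((u 0).1 i) * (u 0).1 i - A i ((v 0).1 i) * (v 0).1 i) := by ring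
      rw [h2, abs_neg]
      calc |A i ((u 0).1 i) * (u 0).1 i - A i ((v 0).1 i) * (v 0).1 i|
          ≤ CA i * |(u 0).1 i - (v 0).1 i| := h1
        _ ≤ CA i * g := mul_le_mul_of_nonneg_left (hx0 i) (hCA0 i)
    have hsigd : |(sigTerm ε μ c d Γ u).1 i - (sigTerm ε μ c d Γ v).1 i| ≤ n * T * g := by
      simp only [sigTerm]
      rw [← Finset.sum_sub_distrib]
      calc |∑ k : Fin n, ((if h : k ≠ i then
              ((u 0).2 ⟨(k, i), h⟩ - c ⟨(k, i), h⟩) *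
                ∫ τ in Iic (0 : ℝ), sigm ε ((u τ).1 k - Γ k) ∂(μ ⟨(k, i), h⟩)
            else 0) - (if h : k ≠ i then
              ((v 0).2 ⟨(k, i), h⟩ - c ⟨(k, i), h⟩) *
                ∫ τ in Iic (0 : ℝ), sigm ε ((v τ).1 k - Γ k) ∂(μ ⟨(k, i), h⟩)
            else 0))|
          ≤ ∑ k : Fin n, |(if h : k ≠ i then
              ((u 0).2 ⟨(k, i), h⟩ - c ⟨(k, i), h⟩) *
                ∫ τ in Iic (0 : ℝ), sigm ε ((u τ).1 k - Γ k) ∂(μ ⟨(k, i), h⟩)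
            else 0) - (if h : k ≠ i then
              ((v 0).2 ⟨(k, i), h⟩ - c ⟨(k, i), h⟩) *
                ∫ τ in Iic (0 : ℝ), sigm ε ((v τ).1 k - Γ k) ∂(μ ⟨(k, i), h⟩)
            else 0)| := Finset.abs_sum_le_sum_abs _ _
        _ ≤ ∑ _k : Fin n, T * g := by
            refine Finset.sum_le_sum fun k _ => ?_
            by_cases h : k ≠ i
            · simp only [dif_pos h]
              set p : IdxZ n := ⟨(k, i), h⟩ with hp
              obtain ⟨Ju, hJu⟩ : ∃ x : ℝ,
                  x = ∫ τ in Iic (0 : ℝ), sigm ε ((u τ).1 k - Γ k) ∂μ p := ⟨_, rfl⟩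
              obtain ⟨Jv, hJv⟩ : ∃ x : ℝ,
                  x = ∫ τ in Iic (0 : ℝ), sigm ε ((v τ).1 k - Γ k) ∂μ p := ⟨_, rfl⟩
              rw [← hJu, ← hJv]
              have hJu0 := hJu ▸ (hJub u hu.1 k p).1
              have hJuM := hJu ▸ (hJub u hu.1 k p).2
              have hJd := hJu ▸ hJv ▸ hJdiff k p
              have key : ((u 0).2 p - c p) * Ju - ((v 0).2 p - c p) * Jv =
                  ((u 0).2 p - (v 0).2 p) * Ju + ((v 0).2 p - c p) * (Ju - Jv) := by ring
              rw [key]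
              calc |((u 0).2 p - (v 0).2 p) * Ju + ((v 0).2 p - c p) * (Ju - Jv)|
                  ≤ |(u 0).2 p - (v 0).2 p| * |Ju| + |(v 0).2 p - c p| * |Ju - Jv| := by
                    refine (abs_add_le _ _).trans ?_
                    rw [abs_mul, abs_mul]
                _ ≤ g * Mm p + (r + c p) * (Kk p / (4 * ε) * g) := by
                    have e1 : |Ju| ≤ Mm p := by rw [abs_of_nonneg hJu0]; exact hJuM
                    have e2 : |(v 0).2 p - c p| ≤ r + c p := by
                      have := hv0z p
                      have := hc p
                      cases abs_cases ((v 0).2 p - c p) <;>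
                        cases abs_cases ((v 0).2 p) <;> nlinarith
                    have e3 := hz0 p
                    have e4 : (0:ℝ) ≤ |Ju - Jv| := abs_nonneg _
                    have e5 : (0:ℝ) ≤ |(u 0).2 p - (v 0).2 p| := abs_nonneg _
                    have e6 : (0:ℝ) ≤ r + c p := by have := hc p; linarith
                    nlinarith [hM0 p, hJd]
                _ = S p * g := by simp only [hS]; ring
                _ ≤ T * g := mul_le_mul_of_nonneg_right (hST p) hg0
            · simp only [dif_neg h, sub_zero, abs_zero]
              exact mul_nonneg hT0 hg0
        _ = n * T * g := by
            rw [Finset.sum_const, Finset.card_univ, Fintype.card_fin, nsmul_eq_mul]; ring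
    calc |(-(A i ((u 0).1 i)) * (u 0).1 i - -(A i ((v 0).1 i)) * (v 0).1 i) +
          ((sigTerm ε μ c d Γ u).1 i - (sigTerm ε μ c d Γ v).1 i)|
        ≤ CA i * g + n * T * g := by
          refine (abs_add_le _ _).trans ?_
          exact add_le_add hdec hsigd
      _ = (CA i + (n : ℝ) * T) * g := by ring
      _ ≤ L * g := by
          have h1 : CA i ≤ ∑ j, CA j :=
            Finset.single_le_sum (f := CA) (fun j _ => hCA0 j) (Finset.mem_univ i)
          have h3 : CA i + (n : ℝ) * T ≤ L := by rw [hL]; linarith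
          exact mul_le_mul_of_nonneg_right h3 hg0
  · -- z components
    intro p
    have hcomp : (fEps ε A B μ c d Γ Istim t u - fEps ε A B μ c d Γ Istim t v).2 p =
        (-(B p ((u 0).2 p)) * (u 0).2 p - -(B p ((v 0).2 p)) * (v 0).2 p) +
        (d p * (∫ τ in Iic (0 : ℝ), sigm ε ((u τ).1 p.1.1 - Γ p.1.1) ∂(μ p)) *
            max ((u 0).1 p.1.2) 0 -
          d p * (∫ τ in Iic (0 : ℝ), sigm ε ((v τ).1 p.1.1 - Γ p.1.1) ∂(μ p)) *
            max ((v 0).1 p.1.2) 0) := by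
      simp only [fEps, decayT, sigTerm, stimT, Prod.snd_sub, Prod.snd_add, Pi.sub_apply,
        Pi.add_apply, Pi.zero_apply]
      ring
    rw [hcomp]
    obtain ⟨Ju, hJu⟩ : ∃ x : ℝ,
        x = ∫ τ in Iic (0 : ℝ), sigm ε ((u τ).1 p.1.1 - Γ p.1.1) ∂μ p := ⟨_, rfl⟩
    obtain ⟨Jv, hJv⟩ : ∃ x : ℝ,
        x = ∫ τ in Iic (0 : ℝ), sigm ε ((v τ).1 p.1.1 - Γ p.1.1) ∂μ p := ⟨_, rfl⟩
    rw [← hJu, ← hJv]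
    set m1 : ℝ := max ((u 0).1 p.1.2) 0 with hm1
    set m2 : ℝ := max ((v 0).1 p.1.2) 0 with hm2
    have hdec : |(-(B p ((u 0).2 p)) * (u 0).2 p - -(B p ((v 0).2 p)) * (v 0).2 p)| ≤
        CB p * g := by
      have h1 := hCBlip p ((u 0).2 p) (abs_le.1 (hu0z p)) ((v 0).2 p) (abs_le.1 (hv0z p))
      have h2 : (-(B p ((u 0).2 p)) * (u 0).2 p - -(B p ((v 0).2 p)) * (v 0).2 p) =
          -(B p ((u 0).2 p) * (u 0).2 p - B p ((v 0).2 p) * (v 0).2 p) := by ring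
      rw [h2, abs_neg]
      calc |B p ((u 0).2 p) * (u 0).2 p - B p ((v 0).2 p) * (v 0).2 p|
          ≤ CB p * |(u 0).2 p - (v 0).2 p| := h1
        _ ≤ CB p * g := mul_le_mul_of_nonneg_left (hz0 p) (hCB0 p)
    have hsigd : |d p * Ju * m1 - d p * Jv * m2| ≤ d p * (r * (Kk p / (4 * ε)) + Mm p) * g := by
      have hJv0 := hJv ▸ (hJub v hv.1 p.1.1 p).1
      have hJvM := hJv ▸ (hJub v hv.1 p.1.1 p).2
      have hJd := hJu ▸ hJv ▸ hJdiff p.1.1 p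
      have hm10 : 0 ≤ m1 := le_max_right _ _
      have hm1r : m1 ≤ r := by
        rw [hm1]
        refine max_le ((le_abs_self _).trans (hu0x p.1.2)) (hr.le)
      have hmm : |m1 - m2| ≤ g := by
        refine le_trans (abs_max_sub_max_le_abs _ _ _) (hx0 p.1.2)
      have key : d p * Ju * m1 - d p * Jv * m2 =
          d p * ((Ju - Jv) * m1 + Jv * (m1 - m2)) := by ring
      rw [key, abs_mul, abs_of_nonneg (hd p), mul_assoc]
      refine mul_le_mul_of_nonneg_left ?_ (hd p)
      calc |(Ju - Jv) * m1 + Jv * (m1 - m2)|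
          ≤ |Ju - Jv| * |m1| + |Jv| * |m1 - m2| := by
            refine (abs_add_le _ _).trans ?_
            rw [abs_mul, abs_mul]
        _ ≤ (Kk p / (4 * ε) * g) * r + Mm p * g := by
            have e1 : |m1| ≤ r := by rw [abs_of_nonneg hm10]; exact hm1r
            have e2 : |Jv| ≤ Mm p := by rw [abs_of_nonneg hJv0]; exact hJvM
            have e4 : (0:ℝ) ≤ |Ju - Jv| := abs_nonneg _
            have e5 : (0:ℝ) ≤ |m1| := abs_nonneg _
            have e6 : (0:ℝ) ≤ |m1 - m2| := abs_nonneg _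
            have e7 : (0:ℝ) ≤ Kk p / (4 * ε) * g :=
              mul_nonneg (div_nonneg (hK0 p) (by positivity)) hg0
            nlinarith [hM0 p]
        _ = (r * (Kk p / (4 * ε)) + Mm p) * g := by ring
    calc |(-(B p ((u 0).2 p)) * (u 0).2 p - -(B p ((v 0).2 p)) * (v 0).2 p) +
          (d p * Ju * m1 - d p * Jv * m2)|
        ≤ CB p * g + d p * (r * (Kk p / (4 * ε)) + Mm p) * g := by
          refine (abs_add_le _ _).trans ?_
          exact add_le_add hdec hsigd
      _ = (CB p + d p * (r * (Kk p / (4 * ε)) + Mm p)) * g := by ring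
      _ ≤ L * g := by
          have h1 : CB p ≤ ∑ q, CB q :=
            Finset.single_le_sum (f := CB) (fun q _ => hCB0 q) (Finset.mem_univ p)
          have h2 : d p * (r * (Kk p / (4 * ε)) + Mm p) ≤ Lz :=
            hLz ▸ Finset.single_le_sum (f := fun q => d q * (r * (Kk q / (4 * ε)) + Mm q))
              (fun q _ => hLzterm q) (Finset.mem_univ p)
          have h3 : CB p + d p * (r * (Kk p / (4 * ε)) + Mm p) ≤ L := by rw [hL]; linarith
          exact mul_le_mul_of_nonneg_right h3 hg0


end
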